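/- Let K be a field and S_1 = K⟨x, y | yx = 1⟩. Then the element x - 1 is a regular element of S_1, i.e. left multiplication and right multiplication by x - 1 are both injective maps S_1 → S_1. -/

import Mathlib

/-!
Grade `S₁` by `deg x = 1`, `deg y = -1`; the relation `yx = 1` is homogeneous, so this is
encoded by the algebra map `S₁ → S₁[t, t⁻¹]`, `x ↦ x t`, `y ↦ y t⁻¹`, which is split by `t ↦ 1`
and hence injective. It sends `x - 1` to `x t - 1`, and a Laurent polynomial `p ≠ 0` satisfies
neither `x t · p = p` nor `p · x t = p`: compare the coefficients in the lowest degree of `p`.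
-/

/-- Defining relation `y * x = 1` for the algebra of one-sided inverses `S₁(R)`. -/
inductive S1Rel (R : Type) [CommRing R] : FreeAlgebra R Bool → FreeAlgebra R Bool → Prop
  | rel : S1Rel R (FreeAlgebra.ι R false * FreeAlgebra.ι R true) 1

/-- `S₁(R) = R⟨x, y | yx = 1⟩`, the algebra of one-sided inverses of `R[x]`. -/
abbrev S1 (R : Type) [CommRing R] := RingQuot (S1Rel R)

/-- The generator `x` of `S₁(R)`. -/
noncomputable def S1.x (R : Type) [CommRing R] : S1 R :=
  RingQuot.mkRingHom (S1Rel R) (FreeAlgebra.ι R true)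

/-- The generator `y` of `S₁(R)`. -/
noncomputable def S1.y (R : Type) [CommRing R] : S1 R :=
  RingQuot.mkRingHom (S1Rel R) (FreeAlgebra.ι R false)

open LaurentPolynomial nonZeroDivisors

namespace LaurentPolynomial

section Ring

variable {R : Type*} [Ring R]

theorem exists_coeff_ne_zero_and_coeff_sub_one_eq_zero {p : R[T;T⁻¹]} (hp : p ≠ 0) :
    ∃ d, p.coeff d ≠ 0 ∧ p.coeff (d - 1) = 0 := by
  have hs : p.coeff.support.Nonempty := Finsupp.support_nonempty_iff.mpr (by simpa using hp)
  refine ⟨p.coeff.support.min' hs, Finsupp.mem_support_iff.mp (p.coeff.support.min'_mem hs), ?_⟩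
  by_contra h
  have := p.coeff.support.min'_le _ (Finsupp.mem_support_iff.mpr h)
  omega

theorem C_mul_T_one_sub_one_mem_nonZeroDivisors (r : R) : C r * T 1 - 1 ∈ R[T;T⁻¹]⁰ := by
  rw [← single_eq_C_mul_T, mem_nonZeroDivisors_iff]
  constructor
  · intro p hp
    by_contra hp0
    obtain ⟨d, hd, hd1⟩ := exists_coeff_ne_zero_and_coeff_sub_one_eq_zero hp0
    rw [sub_mul, one_mul, sub_eq_zero] at hp
    have := congrArg (·.coeff d) hp
    simp only [AddMonoidAlgebra.coeff_single_mul_apply, neg_add_eq_sub, hd1, mul_zero] at this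
    exact hd this.symm
  · intro p hp
    by_contra hp0
    obtain ⟨d, hd, hd1⟩ := exists_coeff_ne_zero_and_coeff_sub_one_eq_zero hp0
    rw [mul_sub, mul_one, sub_eq_zero] at hp
    have := congrArg (·.coeff d) hp
    simp only [AddMonoidAlgebra.coeff_mul_single_apply, ← sub_eq_add_neg, hd1, zero_mul] at this
    exact hd this.symm

end Ring

section EvalOne

variable (R : Type*) [CommSemiring R] {A : Type*} [Semiring A] [Algebra R A]

noncomputable def evalOne : A[T;T⁻¹] →ₐ[R] A :=
  AddMonoidAlgebra.liftNCAlgHom (AlgHom.id R A) 1 fun _ _ => Commute.one_right _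

@[simp]
theorem evalOne_C_mul_T (a : A) (n : ℤ) : evalOne R (C a * T n) = a := by
  simp [evalOne, ← single_eq_C_mul_T]

end EvalOne

end LaurentPolynomial

namespace S1

variable (R : Type) [CommRing R]

theorem y_mul_x : S1.y R * S1.x R = 1 := by
  simpa [S1.x, S1.y] using RingQuot.mkRingHom_rel (S1Rel.rel (R := R))

@[simp]
theorem mkAlgHom_ι_true : RingQuot.mkAlgHom R (S1Rel R) (FreeAlgebra.ι R true) = S1.x R := by
  rw [S1.x, ← RingQuot.mkAlgHom_coe R]; rfl

@[simp]
theorem mkAlgHom_ι_false : RingQuot.mkAlgHom R (S1Rel R) (FreeAlgebra.ι R false) = S1.y R := by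
  rw [S1.y, ← RingQuot.mkAlgHom_coe R]; rfl

noncomputable def grading : S1 R →ₐ[R] (S1 R)[T;T⁻¹] :=
  RingQuot.liftAlgHom R ⟨FreeAlgebra.lift R fun b =>
      if b then C (S1.x R) * T 1 else C (S1.y R) * T (-1), by
    rintro _ _ ⟨⟩
    simp only [map_mul, map_one, FreeAlgebra.lift_ι_apply, if_true, Bool.false_eq_true, if_false]
    rw [mul_assoc, ← mul_assoc (T (-1)), T_mul, mul_assoc, ← T_add, ← mul_assoc, ← map_mul,
      y_mul_x]
    simp⟩

theorem grading_x : grading R (S1.x R) = C (S1.x R) * T 1 := by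
  conv_lhs => rw [← mkAlgHom_ι_true, grading, RingQuot.liftAlgHom_mkAlgHom_apply,
    FreeAlgebra.lift_ι_apply, if_pos rfl]

theorem grading_y : grading R (S1.y R) = C (S1.y R) * T (-1) := by
  conv_lhs => rw [← mkAlgHom_ι_false, grading, RingQuot.liftAlgHom_mkAlgHom_apply,
    FreeAlgebra.lift_ι_apply, if_neg Bool.false_ne_true]

theorem evalOne_grading (a : S1 R) : evalOne R (grading R a) = a := by
  suffices h : (evalOne R).comp (grading R) = AlgHom.id R (S1 R) from DFunLike.congr_fun h a
  ext b
  cases b <;> simp [grading_x, grading_y]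

theorem grading_injective : Function.Injective (grading R) :=
  Function.LeftInverse.injective (evalOne_grading R)

theorem x_sub_one_mem_nonZeroDivisors : S1.x R - 1 ∈ (S1 R)⁰ :=
  mem_nonZeroDivisors_of_injective (grading_injective R) <| by
    simpa [grading_x] using C_mul_T_one_sub_one_mem_nonZeroDivisors (S1.x R)

end S1

/-- Let `K` be a field and `S₁ = K⟨x, y | yx = 1⟩`. Then `x - 1` is a regular element of
`S₁`: left and right multiplication by `x - 1` are injective. -/
theorem S1.x_sub_one_regular (K : Type) [Field K] :
    Function.Injective (fun a : S1 K => (S1.x K - 1) * a) ∧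
    Function.Injective (fun a : S1 K => a * (S1.x K - 1)) :=
  isRegular_iff.mp (isRegular_iff_mem_nonZeroDivisors.mpr (S1.x_sub_one_mem_nonZeroDivisors K))
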